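/- Let Γ be a finitely generated free abelian group and ω : Γ → ℝ an injective homomorphism. Let Λ_ω^+ be the set of functions λ : Γ → ℂ supported on {γ : −ω(γ) > 0} with the Novikov finiteness property, and let exp : Λ_ω^+ → 1 + Λ_ω^+ be the convolution exponential. Suppose λ ∈ Λ_ω^+ and exp(λ) ∈ L¹_η for some homomorphism η : Γ → ℂ. Then there exists t₀ ∈ ℝ such that λ ∈ Λ_ω ∩ L¹_{η+tω} for all t ≥ t₀. -/

import Mathlib

/-- Convolution product on functions `Γ → ℂ` for an additive group `Γ`. -/
noncomputable def aconv {Γ : Type*} [AddCommGroup Γ] (a b : Γ → ℂ) : Γ → ℂ :=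
  fun ρ => ∑' σ : Γ, a σ * b (ρ - σ)

/-- The convolution unit: the delta function at `0`. -/
noncomputable def aone {Γ : Type*} [AddCommGroup Γ] [DecidableEq Γ] : Γ → ℂ :=
  fun γ => if γ = 0 then 1 else 0

/-- Convolution powers. -/
noncomputable def aconvPow {Γ : Type*} [AddCommGroup Γ] [DecidableEq Γ]
    (l : Γ → ℂ) : ℕ → (Γ → ℂ)
  | 0 => aone
  | (n + 1) => aconv l (aconvPow l n)

/-- The convolution exponential `exp(l) = Σ_k l^{*k} / k!`. -/
noncomputable def aexp {Γ : Type*} [AddCommGroup Γ] [DecidableEq Γ] (l : Γ → ℂ) : Γ → ℂ :=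
  fun γ => ∑' k : ℕ, ((Nat.factorial k : ℂ))⁻¹ * aconvPow l k γ

/-- The Novikov condition: `{γ : l γ ≠ 0, -ω(γ) ≤ K}` is finite for all `K`. -/
def Novikov {Γ : Type*} (ω : Γ → ℝ) (l : Γ → ℂ) : Prop :=
  ∀ K : ℝ, {γ : Γ | l γ ≠ 0 ∧ -ω γ ≤ K}.Finite


/-!
Multiplication by the degree `-ω` is a derivation `D` of the convolution product, so writing
`exp λ = 1 - μ` and differentiating gives `D λ = D λ * μ + D (exp λ)`. Let `δ > 0` be the least
degree in the support of `λ`; then `μ` is supported in degrees `≥ δ`, so its `L¹_{η+tω}` norm is at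
most `e^{-tδ} ‖μ‖_η ≤ 1/2` for large `t`, while `‖D (exp λ)‖_{η+tω} ≤ ‖exp λ‖_η` for `t ≥ 1`
because `x e^{-tx} ≤ 1`. Absorbing the first term gives `‖D λ‖_{η+tω} ≤ 2 ‖exp λ‖_η`, and
`‖λ‖ ≤ δ⁻¹ ‖D λ‖`; no logarithm is needed.
-/

open scoped ENNReal Nat
open Finset Filter

section Algebra

variable {Γ : Type*} [AddCommGroup Γ] {ω : Γ →+ ℝ}

def SupportedAbove (ω : Γ →+ ℝ) (c : ℝ) (a : Γ → ℂ) : Prop :=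
  ∀ γ, a γ ≠ 0 → c ≤ -ω γ

noncomputable def omegaDeriv (ω : Γ →+ ℝ) (a : Γ → ℂ) : Γ → ℂ :=
  fun γ => -(ω γ : ℂ) * a γ

lemma exists_ne_zero_of_tsum_ne_zero {α β : Type*} [AddCommMonoid α] [TopologicalSpace α]
    {f : β → α} (h : ∑' b, f b ≠ 0) : ∃ b, f b ≠ 0 := by
  by_contra! hf
  simp [hf] at h

lemma SupportedAbove.mono {c c' : ℝ} {a : Γ → ℂ} (h : SupportedAbove ω c a) (hc : c' ≤ c) :
    SupportedAbove ω c' a :=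
  fun γ hγ => hc.trans (h γ hγ)

lemma omegaDeriv_ne_zero {a : Γ → ℂ} {γ : Γ} (h : omegaDeriv ω a γ ≠ 0) : a γ ≠ 0 :=
  right_ne_zero_of_mul h

lemma SupportedAbove.omegaDeriv {c : ℝ} {a : Γ → ℂ} (h : SupportedAbove ω c a) :
    SupportedAbove ω c (omegaDeriv ω a) :=
  fun γ hγ => h γ (omegaDeriv_ne_zero hγ)

lemma Novikov.omegaDeriv {a : Γ → ℂ} (h : Novikov ω a) : Novikov ω (omegaDeriv ω a) :=
  fun K => (h K).subset fun _ hγ => ⟨omegaDeriv_ne_zero hγ.1, hγ.2⟩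

lemma SupportedAbove.aconv {c c' : ℝ} {d a : Γ → ℂ} (hd : SupportedAbove ω c d)
    (ha : SupportedAbove ω c' a) : SupportedAbove ω (c + c') (aconv d a) := by
  intro γ hγ
  obtain ⟨σ, hσ⟩ := exists_ne_zero_of_tsum_ne_zero hγ
  have h₁ := hd σ (left_ne_zero_of_mul hσ)
  have h₂ := ha _ (right_ne_zero_of_mul hσ)
  rw [map_sub] at h₂
  linarith

lemma aconv_eq_sum {d a : Γ → ℂ} (ha : SupportedAbove ω 0 a) {γ : Γ} {s : Finset Γ}
    (hs : ∀ σ, d σ ≠ 0 → -ω σ ≤ -ω γ → σ ∈ s) :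
    aconv d a γ = ∑ σ ∈ s, d σ * a (γ - σ) := by
  refine tsum_eq_sum fun σ hσ => ?_
  by_cases hdσ : d σ = 0
  · simp [hdσ]
  have haσ : a (γ - σ) = 0 := by
    by_contra h
    have := ha _ h
    rw [map_sub] at this
    exact hσ (hs σ hdσ (by linarith))
  simp [haσ]

lemma Novikov.aconv_eq_sum {d a : Γ → ℂ} (hd : Novikov ω d) (ha : SupportedAbove ω 0 a)
    {γ : Γ} {K : ℝ} (hK : -ω γ ≤ K) :
    aconv d a γ = ∑ σ ∈ (hd K).toFinset, d σ * a (γ - σ) :=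
  _root_.aconv_eq_sum ha fun _ hσ hσγ => (Set.Finite.mem_toFinset _).2 ⟨hσ, hσγ.trans hK⟩

lemma SupportedAbove.sub {c : ℝ} {a b : Γ → ℂ} (ha : SupportedAbove ω c a)
    (hb : SupportedAbove ω c b) : SupportedAbove ω c (a - b) := fun γ h => by
  by_cases hγ : a γ = 0
  · exact hb γ (by simpa [hγ] using h)
  · exact ha γ hγ

lemma aconv_sub {d a b : Γ → ℂ} (hd : Novikov ω d) (ha : SupportedAbove ω 0 a)
    (hb : SupportedAbove ω 0 b) : aconv d (a - b) = aconv d a - aconv d b := by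
  funext γ
  simp only [Pi.sub_apply, hd.aconv_eq_sum ha le_rfl, hd.aconv_eq_sum hb le_rfl,
    hd.aconv_eq_sum (ha.sub hb) le_rfl, ← sum_sub_distrib, mul_sub]

lemma aconv_smul (d a : Γ → ℂ) (c : ℂ) : aconv d (c • a) = c • aconv d a := by
  funext γ
  simp only [aconv, Pi.smul_apply, smul_eq_mul, ← tsum_mul_left, mul_left_comm]

lemma omegaDeriv_aconv {d a : Γ → ℂ} (hd : Novikov ω d) (ha : SupportedAbove ω 0 a) :
    omegaDeriv ω (aconv d a) = aconv (omegaDeriv ω d) a + aconv d (omegaDeriv ω a) := by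
  funext γ
  rw [Pi.add_apply, omegaDeriv, hd.aconv_eq_sum ha le_rfl,
    hd.aconv_eq_sum ha.omegaDeriv le_rfl,
    _root_.aconv_eq_sum (s := (hd (-ω γ)).toFinset) ha fun σ hσ hσγ =>
      (Set.Finite.mem_toFinset _).2 ⟨omegaDeriv_ne_zero hσ, hσγ⟩,
    mul_sum, ← sum_add_distrib]
  refine sum_congr rfl fun σ _ => ?_
  simp only [omegaDeriv, map_sub]
  push_cast
  ring

lemma aconv_aconv_eq_sum_sum {d e a : Γ → ℂ} (hd : Novikov ω d) (he : Novikov ω e)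
    (hd₀ : SupportedAbove ω 0 d) (he₀ : SupportedAbove ω 0 e) (ha : SupportedAbove ω 0 a)
    (γ : Γ) : aconv d (aconv e a) γ = ∑ σ ∈ (hd (-ω γ)).toFinset, ∑ τ ∈ (he (-ω γ)).toFinset,
      d σ * e τ * a (γ - σ - τ) := by
  rw [hd.aconv_eq_sum (by simpa using he₀.aconv ha) le_rfl]
  refine sum_congr rfl fun σ hσ => ?_
  have hσ₀ : 0 ≤ -ω σ := hd₀ σ ((Set.Finite.mem_toFinset _).1 hσ).1
  rw [he.aconv_eq_sum ha (K := -ω γ) (by rw [map_sub]; linarith), mul_sum]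
  simp only [mul_assoc, sub_right_comm γ σ]

lemma aconv_left_comm {d e a : Γ → ℂ} (hd : Novikov ω d) (he : Novikov ω e)
    (hd₀ : SupportedAbove ω 0 d) (he₀ : SupportedAbove ω 0 e) (ha : SupportedAbove ω 0 a) :
    aconv d (aconv e a) = aconv e (aconv d a) := by
  funext γ
  rw [aconv_aconv_eq_sum_sum hd he hd₀ he₀ ha, aconv_aconv_eq_sum_sum he hd he₀ hd₀ ha, sum_comm]
  simp only [mul_comm (d _), sub_right_comm γ]

lemma Novikov.exists_supportedAbove_pos {l : Γ → ℂ} (hlN : Novikov ω l)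
    (hl : ∀ γ, l γ ≠ 0 → 0 < -ω γ) : ∃ δ, 0 < δ ∧ SupportedAbove ω δ l := by
  set S := insert 1 ((hlN 1).toFinset.image fun γ => -ω γ)
  have hS : S.Nonempty := insert_nonempty _ _
  refine ⟨S.min' hS, (lt_min'_iff _ _).2 fun x hx => ?_, fun γ hγ => ?_⟩
  · rcases mem_insert.1 hx with rfl | hx
    · exact one_pos
    obtain ⟨γ, hγ, rfl⟩ := mem_image.1 hx
    exact hl γ ((Set.Finite.mem_toFinset _).1 hγ).1
  · by_cases h₁ : -ω γ ≤ 1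
    · exact min'_le _ _ (mem_insert_of_mem
        (mem_image_of_mem _ ((hlN 1).mem_toFinset.2 ⟨hγ, h₁⟩)))
    · exact (min'_le _ _ (mem_insert_self _ _)).trans (le_of_not_ge h₁)

variable [DecidableEq Γ]

lemma supportedAbove_aone : SupportedAbove ω 0 (aone : Γ → ℂ) := by
  intro γ hγ
  obtain rfl : γ = 0 := by by_contra h; simp [aone, h] at hγ
  simp

lemma aconv_aone (d : Γ → ℂ) : aconv d aone = d := by
  funext γ
  rw [aconv, tsum_eq_single γ fun σ hσ => by simp [aone, sub_eq_zero, Ne.symm hσ]]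
  simp [aone]

lemma omegaDeriv_aone : omegaDeriv ω (aone : Γ → ℂ) = 0 := by
  funext γ
  by_cases h : γ = 0 <;> simp [omegaDeriv, aone, h]

lemma SupportedAbove.aconvPow {δ : ℝ} {l : Γ → ℂ} (hl : SupportedAbove ω δ l) (k : ℕ) :
    SupportedAbove ω (k * δ) (aconvPow l k) := by
  induction k with
  | zero => simpa [_root_.aconvPow] using supportedAbove_aone
  | succ k ih => exact (hl.aconv ih).mono (by push_cast; linarith)

lemma omegaDeriv_aconvPow_succ {l : Γ → ℂ} (hl : Novikov ω l) (hl₀ : SupportedAbove ω 0 l)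
    (k : ℕ) : omegaDeriv ω (aconvPow l (k + 1)) =
      ((k + 1 : ℕ) : ℂ) • aconv (omegaDeriv ω l) (aconvPow l k) := by
  have hpow : ∀ n, SupportedAbove ω 0 (aconvPow l n) := fun n => by
    simpa using hl₀.aconvPow n
  induction k with
  | zero => simp [aconvPow, aconv_aone]
  | succ k ih =>
    rw [aconvPow, omegaDeriv_aconv hl (hpow _), ih, aconv_smul,
      aconv_left_comm hl hl.omegaDeriv hl₀ hl₀.omegaDeriv (hpow k), ← aconvPow]
    push_cast
    module

section Exp

variable {δ : ℝ} {l : Γ → ℂ}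

lemma aexp_eq_sum (hδ : 0 < δ) (hl : SupportedAbove ω δ l) {γ : Γ} {M : ℕ}
    (hM : -ω γ < M * δ) : aexp l γ = ∑ k ∈ range M, (k ! : ℂ)⁻¹ * aconvPow l k γ := by
  refine tsum_eq_sum fun k hk => ?_
  have hkγ : aconvPow l k γ = 0 := by
    by_contra h
    have h₁ := hl.aconvPow k γ h
    have h₂ : (M : ℝ) ≤ k := by exact_mod_cast not_lt.1 (mt mem_range.2 hk)
    nlinarith
  simp [hkγ]

lemma aexp_apply_zero (hδ : 0 < δ) (hl : SupportedAbove ω δ l) : aexp l 0 = 1 := by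
  rw [aexp_eq_sum hδ hl (M := 1) (by simpa using hδ)]
  simp [aconvPow, aone]

lemma SupportedAbove.aexp (hl : SupportedAbove ω 0 l) : SupportedAbove ω 0 (_root_.aexp l) := by
  intro γ hγ
  obtain ⟨k, hk⟩ := exists_ne_zero_of_tsum_ne_zero hγ
  simpa using hl.aconvPow k γ (right_ne_zero_of_mul hk)

lemma supportedAbove_aone_sub_aexp (hδ : 0 < δ) (hl : SupportedAbove ω δ l) :
    SupportedAbove ω δ (aone - aexp l) := by
  intro γ hγ
  have hγ₀ : γ ≠ 0 := by
    rintro rfl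
    simp [aone, aexp_apply_zero hδ hl] at hγ
  obtain ⟨k, hk⟩ := exists_ne_zero_of_tsum_ne_zero (show aexp l γ ≠ 0 by simpa [aone, hγ₀] using hγ)
  have hkγ := right_ne_zero_of_mul hk
  have hk₀ : k ≠ 0 := by
    rintro rfl
    simp [aconvPow, aone, hγ₀] at hkγ
  have h₁ := hl.aconvPow k γ hkγ
  have h₂ : (1 : ℝ) ≤ k := by exact_mod_cast Nat.one_le_iff_ne_zero.2 hk₀
  nlinarith

lemma omegaDeriv_aexp_apply_eq_sum (hδ : 0 < δ) (hl : SupportedAbove ω δ l)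
    (hlN : Novikov ω l) {γ : Γ} {M : ℕ} (hM : -ω γ < M * δ) :
    omegaDeriv ω (aexp l) γ =
      ∑ k ∈ range M, (k ! : ℂ)⁻¹ * aconv (omegaDeriv ω l) (aconvPow l k) γ := by
  have hM' : -ω γ < (M + 1 : ℕ) * δ := by push_cast; linarith
  have hterm : ∀ k, -(ω γ : ℂ) * ((k ! : ℂ)⁻¹ * aconvPow l k γ) =
      (k ! : ℂ)⁻¹ * omegaDeriv ω (aconvPow l k) γ := fun k => mul_left_comm _ _ _
  rw [omegaDeriv, aexp_eq_sum hδ hl hM', mul_sum, sum_range_succ']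
  simp only [hterm, omegaDeriv_aconvPow_succ hlN (hl.mono hδ.le), Pi.smul_apply, smul_eq_mul]
  rw [show aconvPow l 0 = aone from rfl, omegaDeriv_aone, Pi.zero_apply, mul_zero, add_zero]
  refine sum_congr rfl fun k _ => ?_
  rw [Nat.factorial_succ]
  push_cast
  field_simp

lemma aconv_aexp_apply_eq_sum (hδ : 0 < δ) (hl : SupportedAbove ω δ l)
    (hlN : Novikov ω l) {γ : Γ} {M : ℕ} (hM : -ω γ < M * δ) :
    aconv (omegaDeriv ω l) (aexp l) γ =
      ∑ k ∈ range M, (k ! : ℂ)⁻¹ * aconv (omegaDeriv ω l) (aconvPow l k) γ := by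
  have hl₀ := hl.mono hδ.le
  have hs : ∀ σ, omegaDeriv ω l σ ≠ 0 → -ω σ ≤ -ω γ → σ ∈ (hlN (-ω γ)).toFinset :=
    fun σ hσ hσγ => (Set.Finite.mem_toFinset _).2 ⟨omegaDeriv_ne_zero hσ, hσγ⟩
  have hexp : ∀ σ ∈ (hlN (-ω γ)).toFinset, aexp l (γ - σ) =
      ∑ k ∈ range M, (k ! : ℂ)⁻¹ * aconvPow l k (γ - σ) := fun σ hσ => by
    have := hl σ ((Set.Finite.mem_toFinset _).1 hσ).1
    exact aexp_eq_sum hδ hl (by rw [map_sub]; linarith)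
  rw [aconv_eq_sum hl₀.aexp hs, sum_congr rfl fun σ hσ => by rw [hexp σ hσ, mul_sum], sum_comm]
  refine sum_congr rfl fun k _ => ?_
  rw [aconv_eq_sum (by simpa using hl₀.aconvPow k) hs, mul_sum]
  exact sum_congr rfl fun σ _ => mul_left_comm _ _ _

lemma omegaDeriv_aexp (hδ : 0 < δ) (hl : SupportedAbove ω δ l) (hlN : Novikov ω l) :
    omegaDeriv ω (aexp l) = aconv (omegaDeriv ω l) (aexp l) := by
  funext γ
  obtain ⟨M, hM⟩ := exists_nat_gt (-ω γ / δ)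
  have hM' : -ω γ < M * δ := (div_lt_iff₀ hδ).1 hM
  rw [omegaDeriv_aexp_apply_eq_sum hδ hl hlN hM', aconv_aexp_apply_eq_sum hδ hl hlN hM']

lemma omegaDeriv_eq_aconv_add (hδ : 0 < δ) (hl : SupportedAbove ω δ l) (hlN : Novikov ω l) :
    omegaDeriv ω l = aconv (omegaDeriv ω l) (aone - aexp l) + omegaDeriv ω (aexp l) := by
  rw [aconv_sub hlN.omegaDeriv supportedAbove_aone (hl.mono hδ.le).aexp, aconv_aone,
    omegaDeriv_aexp hδ hl hlN, sub_add_cancel]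

end Exp

end Algebra

section Weighted

variable {Γ : Type*} [AddCommGroup Γ] {ω : Γ →+ ℝ} {η : Γ →+ ℂ}

/-- The norm of `L¹_η`. -/
noncomputable def weightedNorm (η : Γ →+ ℂ) (f : Γ → ℂ) : ℝ≥0∞ :=
  ∑' γ, ‖f γ * Complex.exp (η γ)‖ₑ

def twist (η : Γ →+ ℂ) (ω : Γ →+ ℝ) (t : ℝ) : Γ →+ ℂ :=
  AddMonoidHom.mk' (fun γ => η γ + t * ω γ) fun a b => by
    simp only [map_add]
    push_cast
    ring

lemma weightedNorm_le_ofReal_mul {η' : Γ →+ ℂ} {f g : Γ → ℂ} {r : ℝ} (hr : 0 ≤ r)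
    (h : ∀ γ, ‖f γ * Complex.exp (η' γ)‖ ≤ r * ‖g γ * Complex.exp (η γ)‖) :
    weightedNorm η' f ≤ ENNReal.ofReal r * weightedNorm η g := by
  rw [weightedNorm, weightedNorm, ← ENNReal.tsum_mul_left]
  refine ENNReal.tsum_le_tsum fun γ => ?_
  rw [← ofReal_norm, ← ofReal_norm, ← ENNReal.ofReal_mul hr]
  exact ENNReal.ofReal_le_ofReal (h γ)

lemma weightedNorm_mono {f g : Γ → ℂ} (h : ∀ γ, ‖f γ‖ ≤ ‖g γ‖) :
    weightedNorm η f ≤ weightedNorm η g := by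
  simpa using weightedNorm_le_ofReal_mul (η := η) (η' := η) zero_le_one fun γ => by
    rw [one_mul, norm_mul, norm_mul]
    gcongr
    exact h γ

lemma weightedNorm_add_le (f g : Γ → ℂ) :
    weightedNorm η (f + g) ≤ weightedNorm η f + weightedNorm η g := by
  rw [weightedNorm, weightedNorm, weightedNorm, ← ENNReal.tsum_add]
  exact ENNReal.tsum_le_tsum fun γ => by rw [Pi.add_apply, add_mul]; exact enorm_add_le _ _

lemma weightedNorm_sub_le (f g : Γ → ℂ) :
    weightedNorm η (f - g) ≤ weightedNorm η f + weightedNorm η g := by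
  rw [weightedNorm, weightedNorm, weightedNorm, ← ENNReal.tsum_add]
  exact ENNReal.tsum_le_tsum fun γ => by rw [Pi.sub_apply, sub_mul]; exact enorm_sub_le

lemma weightedNorm_aone [DecidableEq Γ] : weightedNorm η aone = 1 := by
  rw [weightedNorm, tsum_eq_single 0 fun γ hγ => by simp [aone, hγ]]
  simp [aone]

lemma enorm_aconv_mul_exp_le (f g : Γ → ℂ) (γ : Γ) :
    ‖aconv f g γ * Complex.exp (η γ)‖ₑ ≤ ∑' σ, ‖f σ * Complex.exp (η σ)‖ₑ *
      ‖g (γ - σ) * Complex.exp (η (γ - σ))‖ₑ := by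
  have h : aconv f g γ * Complex.exp (η γ) =
      ∑' σ, f σ * Complex.exp (η σ) * (g (γ - σ) * Complex.exp (η (γ - σ))) := by
    rw [aconv, ← tsum_mul_right]
    refine tsum_congr fun σ => ?_
    rw [show η γ = η σ + η (γ - σ) by rw [← map_add, add_sub_cancel], Complex.exp_add]
    ring
  rw [h]
  exact enorm_tsum_le_tsum_enorm.trans_eq (tsum_congr fun σ => enorm_mul _ _)

lemma weightedNorm_aconv_le (f g : Γ → ℂ) :
    weightedNorm η (aconv f g) ≤ weightedNorm η f * weightedNorm η g := by
  have hshift : ∀ σ, ∑' γ, ‖g (γ - σ) * Complex.exp (η (γ - σ))‖ₑ = weightedNorm η g :=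
    fun σ => (Equiv.subRight σ).tsum_eq fun γ => ‖g γ * Complex.exp (η γ)‖ₑ
  calc weightedNorm η (aconv f g)
      ≤ ∑' γ, ∑' σ, ‖f σ * Complex.exp (η σ)‖ₑ * ‖g (γ - σ) * Complex.exp (η (γ - σ))‖ₑ :=
        ENNReal.tsum_le_tsum (enorm_aconv_mul_exp_le f g)
    _ = weightedNorm η f * weightedNorm η g := by
        simp only [ENNReal.tsum_comm (α := Γ), ENNReal.tsum_mul_left, hshift,
          ENNReal.tsum_mul_right, weightedNorm]

lemma weightedNorm_le_of_forall_indicator_le {v : Γ → ℝ} {f : Γ → ℂ} {C : ℝ≥0∞}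
    (h : ∀ K, weightedNorm η ({γ | v γ ≤ K}.indicator f) ≤ C) : weightedNorm η f ≤ C := by
  refine ENNReal.summable.tsum_le_of_sum_le fun s => ?_
  obtain ⟨K, hK⟩ := (s.image v).exists_le
  calc ∑ γ ∈ s, ‖f γ * Complex.exp (η γ)‖ₑ
      = ∑ γ ∈ s, ‖{γ | v γ ≤ K}.indicator f γ * Complex.exp (η γ)‖ₑ :=
        sum_congr rfl fun γ hγ => by
          rw [Set.indicator_of_mem (show γ ∈ {γ | v γ ≤ K} from hK _ (mem_image_of_mem _ hγ))]
    _ ≤ weightedNorm η ({γ | v γ ≤ K}.indicator f) := ENNReal.sum_le_tsum s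
    _ ≤ C := h K

lemma Novikov.weightedNorm_indicator_ne_top {f : Γ → ℂ} (hf : Novikov ω f) (K : ℝ) :
    weightedNorm η ({γ | -ω γ ≤ K}.indicator f) ≠ ⊤ := by
  rw [weightedNorm, tsum_eq_sum (s := (hf K).toFinset) fun γ hγ => ?_]
  · exact ENNReal.sum_ne_top.2 fun _ _ => enorm_ne_top
  · rw [Set.Finite.mem_toFinset] at hγ
    by_cases hγK : -ω γ ≤ K
    · simp [Set.indicator_of_mem (show γ ∈ {γ | -ω γ ≤ K} from hγK),
        not_ne_iff.1 fun h => hγ ⟨h, hγK⟩]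
    · simp [Set.indicator_of_notMem (show γ ∉ {γ | -ω γ ≤ K} from hγK)]

/-- Since `g` is supported in `{-ω ≥ 0}`, the truncation `fK` of `f` to `{-ω ≤ K}` satisfies
`|fK| ≤ |fK * g + h|`, and `‖fK‖` is finite by the Novikov condition, so it can be absorbed. -/
lemma weightedNorm_le_two_mul {f g h : Γ → ℂ} (hf : Novikov ω f) (hg : SupportedAbove ω 0 g)
    (hfgh : f = aconv f g + h) (hg_le : weightedNorm η g ≤ 2⁻¹) :
    weightedNorm η f ≤ 2 * weightedNorm η h := by
  refine weightedNorm_le_of_forall_indicator_le (v := fun γ => -ω γ) fun K => ?_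
  set fK := {γ | -ω γ ≤ K}.indicator f
  have hfK_eq : ∀ σ, -ω σ ≤ K → fK σ = f σ := fun σ hσ =>
    Set.indicator_of_mem (show σ ∈ {γ | -ω γ ≤ K} from hσ) f
  have hfK : ∀ γ, ‖fK γ‖ ≤ ‖aconv fK g γ + h γ‖ := by
    intro γ
    by_cases hγ : -ω γ ≤ K
    · have hconv : aconv f g γ = aconv fK g γ := tsum_congr fun σ => by
        by_cases hσ : g (γ - σ) = 0
        · simp [hσ]
        have := hg _ hσ
        rw [map_sub] at this
        rw [hfK_eq σ (by linarith)]
      rw [hfK_eq γ hγ, ← hconv]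
      exact (congrArg norm (congrFun hfgh γ)).le
    · simp [fK, Set.indicator_of_notMem (show γ ∉ {γ | -ω γ ≤ K} from hγ)]
  have hle : weightedNorm η fK ≤ weightedNorm η fK / 2 + weightedNorm η h :=
    calc weightedNorm η fK ≤ weightedNorm η (aconv fK g + h) := weightedNorm_mono hfK
      _ ≤ weightedNorm η (aconv fK g) + weightedNorm η h := weightedNorm_add_le _ _
      _ ≤ weightedNorm η fK / 2 + weightedNorm η h := by
        rw [div_eq_mul_inv]
        gcongr
        exact (weightedNorm_aconv_le _ _).trans (by gcongr)
  have hhalf : weightedNorm η fK / 2 ≤ weightedNorm η h :=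
    ENNReal.le_of_add_le_add_left (ENNReal.div_ne_top (hf.weightedNorm_indicator_ne_top K)
      two_ne_zero) (by rwa [ENNReal.add_halves])
  rwa [ENNReal.div_le_iff two_ne_zero ENNReal.ofNat_ne_top, mul_comm] at hhalf

lemma norm_mul_exp_twist (z : ℂ) (γ : Γ) (t : ℝ) :
    ‖z * Complex.exp (twist η ω t γ)‖ = ‖z * Complex.exp (η γ)‖ * Real.exp (t * ω γ) := by
  rw [twist, AddMonoidHom.mk'_apply, Complex.exp_add, ← mul_assoc, norm_mul, ← Complex.ofReal_mul,
    Complex.norm_exp_ofReal]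

lemma weightedNorm_twist_le {δ t : ℝ} {g : Γ → ℂ} (ht : 0 ≤ t) (hg : SupportedAbove ω δ g) :
    weightedNorm (twist η ω t) g ≤ ENNReal.ofReal (Real.exp (-(t * δ))) * weightedNorm η g :=
  weightedNorm_le_ofReal_mul (Real.exp_nonneg _) fun γ => by
    rw [norm_mul_exp_twist, mul_comm]
    by_cases hγ : g γ = 0
    · simp [hγ]
    have := hg γ hγ
    gcongr
    nlinarith

lemma mul_exp_neg_mul_le_one {x t : ℝ} (hx : 0 ≤ x) (ht : 1 ≤ t) : x * Real.exp (-(t * x)) ≤ 1 := by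
  rw [Real.exp_neg, mul_inv_le_iff₀ (Real.exp_pos _), one_mul]
  nlinarith [Real.add_one_le_exp (t * x)]

lemma weightedNorm_twist_omegaDeriv_le {t : ℝ} {f : Γ → ℂ} (ht : 1 ≤ t)
    (hf : SupportedAbove ω 0 f) :
    weightedNorm (twist η ω t) (omegaDeriv ω f) ≤ weightedNorm η f := by
  simpa using weightedNorm_le_ofReal_mul (η := η) zero_le_one fun γ => by
    by_cases hγ : f γ = 0
    · simp [omegaDeriv, hγ]
    have hx := hf γ hγ
    rw [norm_mul_exp_twist, omegaDeriv, mul_assoc, norm_mul, norm_neg, Complex.norm_real,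
      Real.norm_of_nonpos (by linarith), mul_right_comm, one_mul]
    have : -ω γ * Real.exp (t * ω γ) ≤ 1 := by simpa using mul_exp_neg_mul_le_one hx ht
    exact mul_le_of_le_one_left (norm_nonneg _) this

lemma weightedNorm_le_inv_mul_omegaDeriv {δ : ℝ} {f : Γ → ℂ} (hδ : 0 < δ)
    (hf : SupportedAbove ω δ f) :
    weightedNorm η f ≤ ENNReal.ofReal δ⁻¹ * weightedNorm η (omegaDeriv ω f) :=
  weightedNorm_le_ofReal_mul (inv_nonneg.2 hδ.le) fun γ => by
    by_cases hγ : f γ = 0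
    · simp [omegaDeriv, hγ]
    have := hf γ hγ
    rw [omegaDeriv, mul_assoc, norm_mul (-(ω γ : ℂ)), norm_neg, Complex.norm_real,
      Real.norm_of_nonpos (by linarith), ← mul_assoc]
    exact le_mul_of_one_le_left (norm_nonneg _) ((le_inv_mul_iff₀ hδ).2 (by linarith))

end Weighted

lemma eventually_ofReal_exp_neg_mul_mul_le {δ : ℝ} {C ε : ℝ≥0∞} (hδ : 0 < δ) (hC : C ≠ ⊤)
    (hε : 0 < ε) : ∀ᶠ t in atTop, ENNReal.ofReal (Real.exp (-(t * δ))) * C ≤ ε := by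
  have h : Tendsto (fun t => ENNReal.ofReal (Real.exp (-(t * δ)))) atTop (nhds 0) := by
    simpa using ENNReal.tendsto_ofReal
      (Real.tendsto_exp_neg_atTop_nhds_zero.comp (tendsto_id.atTop_mul_const hδ))
  exact Tendsto.eventually_le_const hε (by simpa using ENNReal.Tendsto.mul_const h (Or.inr hC))

theorem stmt_9_general {Γ : Type*} [AddCommGroup Γ] [DecidableEq Γ]
    (ω : Γ →+ ℝ) (η : Γ →+ ℂ)
    (l : Γ → ℂ) (hlN : Novikov ω l)
    (hsupp : ∀ γ : Γ, l γ ≠ 0 → 0 < -ω γ)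
    (hexp : Summable fun γ => ‖aexp l γ * Complex.exp (η γ)‖) :
    ∃ t₀ : ℝ, ∀ t : ℝ, t₀ ≤ t →
      Summable fun γ => ‖l γ * Complex.exp (η γ + (t : ℂ) * (ω γ : ℂ))‖ := by
  obtain ⟨δ, hδ, hl⟩ := hlN.exists_supportedAbove_pos hsupp
  have hexp' : weightedNorm η (aexp l) ≠ ⊤ := tsum_enorm_ne_top_iff_summable_norm.2 hexp
  have hμ : weightedNorm η (aone - aexp l) ≠ ⊤ := ne_top_of_le_ne_top
    (by simpa [weightedNorm_aone] using hexp') (weightedNorm_sub_le _ _)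
  obtain ⟨t₀, ht₀⟩ := eventually_atTop.1 ((eventually_ge_atTop 1).and
    (eventually_ofReal_exp_neg_mul_mul_le hδ hμ (by norm_num : (0 : ℝ≥0∞) < 2⁻¹)))
  refine ⟨t₀, fun t ht => ?_⟩
  obtain ⟨ht₁, hμt⟩ := ht₀ t ht
  have hμ₀ := supportedAbove_aone_sub_aexp hδ hl
  have hDl : weightedNorm (twist η ω t) (omegaDeriv ω l) ≤ 2 * weightedNorm η (aexp l) :=
    (weightedNorm_le_two_mul hlN.omegaDeriv (hμ₀.mono hδ.le) (omegaDeriv_eq_aconv_add hδ hl hlN)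
      ((weightedNorm_twist_le (by linarith) hμ₀).trans hμt)).trans
      (by gcongr; exact weightedNorm_twist_omegaDeriv_le ht₁ (hl.mono hδ.le).aexp)
  have hl_le : weightedNorm (twist η ω t) l ≤ ENNReal.ofReal δ⁻¹ * (2 * weightedNorm η (aexp l)) :=
    (weightedNorm_le_inv_mul_omegaDeriv hδ hl).trans (by gcongr)
  exact tsum_enorm_ne_top_iff_summable_norm.1 (ne_top_of_le_ne_top (by finiteness) hl_le)

/-- If `l ∈ Λ_ω⁺` and `exp(l) ∈ L¹_η`, then `l ∈ Λ_ω ∩ L¹_{η + tω}` for all sufficiently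
large `t`. -/
theorem stmt_9 {Γ : Type*} [AddCommGroup Γ] [DecidableEq Γ]
    [Module.Free ℤ Γ] [Module.Finite ℤ Γ]
    (ω : Γ →+ ℝ) (hω : Function.Injective ω) (η : Γ →+ ℂ)
    (l : Γ → ℂ) (hlN : Novikov ω l)
    (hsupp : ∀ γ : Γ, l γ ≠ 0 → 0 < -ω γ)
    (hexp : Summable fun γ => ‖aexp l γ * Complex.exp (η γ)‖) :
    ∃ t₀ : ℝ, ∀ t : ℝ, t₀ ≤ t →
      Summable fun γ => ‖l γ * Complex.exp (η γ + (t : ℂ) * (ω γ : ℂ))‖ :=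
  stmt_9_general ω η l hlN hsupp hexp
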